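/- arXiv:1806.09468 — 3 statements merged into one kernel-verified Lean document; each statement's English description precedes it below -/
import Mathlib

section
/- For all complex numbers x and t, e^{x(e^t − 1)} = Σ_{n=0}^{∞} φ_n(x) t^n / n!, where φ_n(x) = Σ_{k=0}^{n} S(n,k) x^k is the n-th exponential polynomial and the series converges absolutely. -/
/-!
Expand the double series `∑_{n,k} S(n,k) x^k tⁿ / n!`. Summing over `k` first gives
`φₙ(x) tⁿ / n!`, because `S(n,k) = 0` for `k > n` (a `k`-th finite difference of `jⁿ` vanishes).
Summing over `n` first, the alternating-sum formula for `k! S(n,k)` turns the `k`-th column into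
`x^k ∑_j (-1)^(k-j) C(k,j) e^(jt) / k! = (x (eᵗ - 1))^k / k!`, whose sum over `k` is
`e^(x (eᵗ - 1))`. The bound `|S(n,k)| ≤ 2^k kⁿ / k!` makes the double series absolutely
convergent, which justifies both orders of summation.
-/

open Finset

/-- The Stirling number of the second kind `S(m,n)`, defined (as a complex number) by
`n! * S(m,n) = ∑ k ∈ range (n+1), (-1)^(n-k) * C(n,k) * k^m` (with `(0:ℂ)^0 = 1`). -/
noncomputable def stirling2 (m n : ℕ) : ℂ :=
  (n.factorial : ℂ)⁻¹ *
    ∑ k ∈ range (n + 1), (-1) ^ (n - k) * (n.choose k : ℂ) * (k : ℂ) ^ m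

/-- The `n`-th exponential polynomial `φ_n(x) = ∑ k ∈ range (n+1), S(n,k) x^k`. -/
noncomputable def expPoly (n : ℕ) (x : ℂ) : ℂ :=
  ∑ k ∈ range (n + 1), stirling2 n k * x ^ k

theorem Summable.hasSum_of_hasSum_fiberwise_snd {α β γ : Type*} [AddCommMonoid α]
    [TopologicalSpace α] [ContinuousAdd α] [T3Space α] {f : β × γ → α} {g : γ → α} {a : α}
    (hf : Summable f) (hfg : ∀ c, HasSum (fun b ↦ f (b, c)) (g c)) (hg : HasSum g a) :
    HasSum f a := by
  have hswap : HasSum (fun p : γ × β ↦ f p.swap) (∑' p, f p) :=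
    (Equiv.prodComm γ β).hasSum_iff.mpr hf.hasSum
  rw [hg.unique (hswap.prod_fiberwise hfg)]
  exact hf.hasSum

theorem Summable.norm_of_hasSum_fiberwise {β γ E : Type*} [NormedAddCommGroup E]
    {f : β × γ → E} {g : β → E} (hf : Summable fun p ↦ ‖f p‖)
    (hfg : ∀ b, HasSum (fun c ↦ f (b, c)) (g b)) : Summable fun b ↦ ‖g b‖ :=
  hf.prod.of_nonneg_of_le (fun _ ↦ norm_nonneg _) fun b ↦
    (hfg b).tsum_eq ▸ norm_tsum_le_tsum_norm (hf.prod_factor b)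

theorem hasSum_sum_mul_pow_mul_pow_div_factorial {𝕂 ι : Type*} [NormedField 𝕂]
    [NormedAlgebra ℚ 𝕂] [CompleteSpace 𝕂] (s : Finset ι) (a c : ι → 𝕂) (t : 𝕂) :
    HasSum (fun n ↦ (∑ i ∈ s, a i * c i ^ n) * t ^ n / n.factorial)
      (∑ i ∈ s, a i * NormedSpace.exp (c i * t)) := by
  simp only [sum_mul, sum_div]
  refine hasSum_sum fun i _ ↦
    ((NormedSpace.expSeries_div_hasSum_exp (c i * t)).mul_left (a i)).congr_fun fun n ↦ ?_
  ring

theorem sum_alternating_choose_mul_pow_eq_zero {R : Type*} [CommRing R] {n k : ℕ} (h : n < k) :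
    ∑ j ∈ range (k + 1), (-1 : R) ^ (k - j) * (k.choose j : R) * (j : R) ^ n = 0 := by
  have := congr_fun (fwdDiff_iter_pow_eq_zero_of_lt (R := R) h) 0
  rw [fwdDiff_iter_eq_sum_shift] at this
  simpa [zsmul_eq_mul] using this

theorem stirling2_eq_zero_of_lt {n k : ℕ} (h : n < k) : stirling2 n k = 0 := by
  rw [stirling2, sum_alternating_choose_mul_pow_eq_zero h, mul_zero]

theorem norm_stirling2_le (n k : ℕ) : ‖stirling2 n k‖ ≤ 2 ^ k * k ^ n / k.factorial := by
  rw [stirling2, norm_mul, norm_inv, Complex.norm_natCast, inv_mul_eq_div]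
  gcongr
  calc ‖∑ j ∈ range (k + 1), (-1) ^ (k - j) * (k.choose j : ℂ) * (j : ℂ) ^ n‖
      ≤ ∑ j ∈ range (k + 1), (k.choose j : ℝ) * (k : ℝ) ^ n := by
        refine (norm_sum_le _ _).trans (sum_le_sum fun j hj ↦ ?_)
        simp only [norm_mul, norm_pow, norm_neg, norm_one, one_pow, one_mul,
          Complex.norm_natCast]
        gcongr
        exact mem_range_succ_iff.mp hj
    _ = 2 ^ k * k ^ n := by
        rw [← sum_mul]
        exact_mod_cast congrArg (· * k ^ n) (Nat.sum_range_choose k)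

theorem hasSum_stirling2_mul_pow_div_factorial (k : ℕ) (t : ℂ) :
    HasSum (fun n ↦ stirling2 n k * t ^ n / n.factorial)
      ((Complex.exp t - 1) ^ k / k.factorial) := by
  have hbinom : (Complex.exp t - 1) ^ k / k.factorial = (k.factorial : ℂ)⁻¹ *
      ∑ j ∈ range (k + 1), (-1) ^ (k - j) * k.choose j * NormedSpace.exp ((j : ℂ) * t) := by
    rw [← Complex.exp_eq_exp_ℂ, sub_eq_add_neg, add_pow, div_eq_inv_mul]
    congr 1
    refine sum_congr rfl fun j _ ↦ ?_
    rw [Complex.exp_nat_mul]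
    ring
  rw [hbinom]
  refine ((hasSum_sum_mul_pow_mul_pow_div_factorial _ _ _ t).mul_left _).congr_fun fun n ↦ ?_
  rw [stirling2]
  ring

theorem summable_norm_stirling2_mul_pow_mul_pow_div_factorial (x t : ℂ) :
    Summable fun p : ℕ × ℕ ↦ ‖stirling2 p.1 p.2 * x ^ p.2 * t ^ p.1 / p.1.factorial‖ := by
  set g : ℕ × ℕ → ℝ := fun p ↦
    (2 * ‖x‖) ^ p.2 / p.2.factorial * ((p.2 * ‖t‖) ^ p.1 / p.1.factorial)
  have hg_nonneg : 0 ≤ g := fun p ↦ by positivity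
  have hcol : ∀ k, HasSum (fun n ↦ g (n, k))
      ((2 * ‖x‖) ^ k / k.factorial * Real.exp (k * ‖t‖)) := by
    intro k
    rw [Real.exp_eq_exp_ℝ]
    exact (NormedSpace.expSeries_div_hasSum_exp ((k : ℝ) * ‖t‖)).mul_left
      ((2 * ‖x‖) ^ k / k.factorial)
  have hg : Summable fun p : ℕ × ℕ ↦ g p.swap :=
    (summable_prod_of_nonneg fun p ↦ hg_nonneg p.swap).2
      ⟨fun k ↦ (hcol k).summable,
        (Real.summable_pow_div_factorial (2 * ‖x‖ * Real.exp ‖t‖)).congr fun k ↦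
          ((hcol k).tsum_eq.trans (by rw [Real.exp_nat_mul]; ring)).symm⟩
  refine hg.prod_symm.of_nonneg_of_le (fun _ ↦ norm_nonneg _) fun ⟨n, k⟩ ↦ ?_
  calc ‖stirling2 n k * x ^ k * t ^ n / n.factorial‖
      = ‖stirling2 n k‖ * ‖x‖ ^ k * ‖t‖ ^ n / n.factorial := by
        simp only [norm_div, norm_mul, norm_pow, Complex.norm_natCast]
    _ ≤ 2 ^ k * k ^ n / k.factorial * ‖x‖ ^ k * ‖t‖ ^ n / n.factorial := by
        gcongr
        exact norm_stirling2_le n k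
    _ = g (n, k) := by
        simp only [g]
        ring

theorem hasSum_stirling2_mul_pow (n : ℕ) (x : ℂ) :
    HasSum (fun k ↦ stirling2 n k * x ^ k) (expPoly n x) :=
  hasSum_sum_of_ne_finset_zero fun k hk ↦ by
    rw [stirling2_eq_zero_of_lt (by simpa using hk), zero_mul]

/-- For all complex `x` and `t`, the series `∑ n, φ_n(x) t^n / n!` converges
absolutely and its sum is `e^{x(e^t - 1)}`. -/
theorem exponential_polynomial_generating_function (x t : ℂ) :
    Summable (fun n : ℕ => ‖expPoly n x * t ^ n / (n.factorial : ℂ)‖) ∧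
    HasSum (fun n : ℕ => expPoly n x * t ^ n / (n.factorial : ℂ))
      (Complex.exp (x * (Complex.exp t - 1))) := by
  set f : ℕ × ℕ → ℂ := fun p ↦ stirling2 p.1 p.2 * x ^ p.2 * t ^ p.1 / p.1.factorial
  have hnorm : Summable fun p ↦ ‖f p‖ :=
    summable_norm_stirling2_mul_pow_mul_pow_div_factorial x t
  have hrow : ∀ n, HasSum (fun k ↦ f (n, k)) (expPoly n x * t ^ n / n.factorial) :=
    fun n ↦ ((hasSum_stirling2_mul_pow n x).mul_right (t ^ n)).div_const (n.factorial : ℂ)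
  have hcol : ∀ k, HasSum (fun n ↦ f (n, k)) ((x * (Complex.exp t - 1)) ^ k / k.factorial) := by
    intro k
    rw [mul_pow, mul_div_assoc]
    refine ((hasSum_stirling2_mul_pow_div_factorial k t).mul_left _).congr_fun fun n ↦ ?_
    ring
  have hf : HasSum f (Complex.exp (x * (Complex.exp t - 1))) := by
    refine hnorm.of_norm.hasSum_of_hasSum_fiberwise_snd hcol ?_
    rw [Complex.exp_eq_exp_ℂ]
    exact NormedSpace.expSeries_div_hasSum_exp _
  exact ⟨hnorm.norm_of_hasSum_fiberwise hrow, hf.prod_fiberwise hrow⟩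
end

section
/- For every complex number t with |t| < π, 2/(e^t + 1) = Σ_{m=0}^{∞} ω_m(−1/2) · t^m / m!, where ω_m(−1/2) = Σ_{n=0}^{m} S(m,n) · n! · (−1)^n / 2^n and the series converges. -/
open Finset

/-- The `m`-th geometric polynomial `ω_m(z) = ∑ n in range (m+1), S(m,n) n! z^n`. -/
noncomputable def geomPoly (m : ℕ) (z : ℂ) : ℂ :=
  ∑ n ∈ range (m + 1), stirling2 m n * (n.factorial : ℂ) * z ^ n

/-!
Since `n! S(m,n) = Δⁿ[r ↦ r^m](0)`, the exponential generating function in `m` of these numbers is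
`Δⁿ[r ↦ e^{rt}](0) = (e^t - 1)^n`. Summing the double series `∑ Δⁿ[r^m](0) w^n t^m/m!` in both
orders therefore gives `∑ ω_m(w) t^m/m! = 1/(1 - w(e^t - 1))`; it converges absolutely when
`|w|(e^{|t|} - 1) < 1`, because forward differences of a monomial at `0` are nonnegative. For
`w = -1/2` this proves the identity for `|t| < log 3`. The function `2/(e^t + 1)` is holomorphic
on `|t| < π` (its poles are the odd multiples of `πi`), so its Taylor series at `0`, which is the
series above, converges to it on that whole disc.
-/

open Metric Filter Topology fwdDiff
open scoped Nat

section

variable {R : Type*} [CommRing R]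

theorem fwdDiff_pow (m : ℕ) :
    Δ_[1] (fun r : R ↦ r ^ m) = ∑ i ∈ range m, m.choose i • fun r ↦ r ^ i := by
  ext x
  simp [nsmul_eq_mul, fwdDiff, add_pow, sum_range_succ, mul_comm]

theorem fwdDiff_iter_pow_nonneg [PartialOrder R] [IsOrderedRing R] (n m : ℕ) {y : R}
    (hy : 0 ≤ y) : 0 ≤ Δ_[1] ^[n] (fun r : R ↦ r ^ m) y := by
  induction n generalizing m with
  | zero => exact pow_nonneg hy m
  | succ n ih =>
    rw [Function.iterate_succ_apply, fwdDiff_pow, fwdDiff_iter_finsetSum, Finset.sum_apply]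
    exact sum_nonneg fun i _ ↦ by
      rw [fwdDiff_iter_const_smul, Pi.smul_apply]
      exact nsmul_nonneg (ih i) _

end

theorem HasSum.fwdDiff_iter {ι M G : Type*} [AddCommMonoid M] [AddCommGroup G] [TopologicalSpace G]
    [IsTopologicalAddGroup G] {f : ι → M → G} {F : M → G} (hf : ∀ x, HasSum (fun i ↦ f i x) (F x))
    (h : M) (n : ℕ) (y : M) : HasSum (fun i ↦ Δ_[h] ^[n] (f i) y) (Δ_[h] ^[n] F y) := by
  simp_rw [fwdDiff_iter_eq_sum_shift]
  exact hasSum_sum fun k _ ↦ (hf _).const_smul _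

theorem hasSum_fwdDiff_iter_pow_mul_div_factorial (n : ℕ) (t : ℂ) :
    HasSum (fun m ↦ Δ_[1] ^[n] (fun r : ℂ ↦ r ^ m) 0 * t ^ m / m !) ((Complex.exp t - 1) ^ n) := by
  let e : AddChar ℂ ℂ :=
    { toFun := fun r ↦ Complex.exp (r * t)
      map_zero_eq_one' := by simp
      map_add_eq_mul' := fun a b ↦ by simp [add_mul, Complex.exp_add] }
  have hexp (r : ℂ) : HasSum (fun m ↦ (r * t) ^ m / m !) (e r) := by
    simpa [e, Complex.exp_eq_exp_ℂ] using NormedSpace.expSeries_div_hasSum_exp (r * t)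
  have hterm (m : ℕ) : (fun r ↦ (r * t) ^ m / m !) = (t ^ m / m !) • fun r : ℂ ↦ r ^ m := by
    ext r; simp only [Pi.smul_apply, smul_eq_mul]; ring
  have h := HasSum.fwdDiff_iter (f := fun m r ↦ (r * t) ^ m / m !) hexp 1 n 0
  simp only [hterm, fwdDiff_iter_const_smul, Pi.smul_apply, smul_eq_mul,
    fwdDiff_addChar_eq] at h
  rw [AddChar.map_zero_eq_one, mul_one,
    show e 1 = Complex.exp t from congrArg Complex.exp (one_mul t)] at h
  simpa only [mul_comm (t ^ _ / _), mul_div_assoc] using h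

theorem stirling2_mul_factorial (m n : ℕ) :
    stirling2 m n * n ! = Δ_[1] ^[n] (fun r : ℂ ↦ r ^ m) 0 := by
  rw [stirling2, mul_right_comm, inv_mul_cancel₀ (by simp [Nat.factorial_ne_zero]), one_mul,
    fwdDiff_iter_eq_sum_shift]
  simp

open scoped ComplexOrder in
theorem hasSum_norm_fwdDiff_iter_pow_mul_div_factorial (n : ℕ) (t : ℂ) :
    HasSum (fun m ↦ ‖Δ_[1] ^[n] (fun r : ℂ ↦ r ^ m) 0 * t ^ m / (m ! : ℂ)‖)
      ((Real.exp ‖t‖ - 1) ^ n) := by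
  -- At the real point `‖t‖` every term is nonnegative, hence equal to its norm.
  have hterm (m : ℕ) : Δ_[1] ^[n] (fun r : ℂ ↦ r ^ m) 0 * (‖t‖ : ℂ) ^ m / m ! =
      ((‖Δ_[1] ^[n] (fun r : ℂ ↦ r ^ m) 0 * t ^ m / (m ! : ℂ)‖ : ℝ) : ℂ) := by
    have hnonneg : 0 ≤ Δ_[1] ^[n] (fun r : ℂ ↦ r ^ m) 0 * ((‖t‖ ^ m / m ! : ℝ) : ℂ) :=
      mul_nonneg (fwdDiff_iter_pow_nonneg n m le_rfl) (Complex.zero_le_real.2 (by positivity))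
    calc Δ_[1] ^[n] (fun r : ℂ ↦ r ^ m) 0 * (‖t‖ : ℂ) ^ m / m !
        = Δ_[1] ^[n] (fun r : ℂ ↦ r ^ m) 0 * ((‖t‖ ^ m / m ! : ℝ) : ℂ) := by push_cast; ring
      _ = ‖Δ_[1] ^[n] (fun r : ℂ ↦ r ^ m) 0 * ((‖t‖ ^ m / m ! : ℝ) : ℂ)‖ :=
        (RCLike.norm_of_nonneg' hnonneg).symm
      _ = ‖Δ_[1] ^[n] (fun r : ℂ ↦ r ^ m) 0 * t ^ m / (m ! : ℂ)‖ := by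
        simp [mul_div_assoc]
  have h := hasSum_fwdDiff_iter_pow_mul_div_factorial n (‖t‖ : ℂ)
  rw [funext hterm, ← Complex.ofReal_exp, ← Complex.ofReal_one, ← Complex.ofReal_sub,
    ← Complex.ofReal_pow] at h
  exact Complex.hasSum_ofReal.1 h

theorem Complex.norm_exp_sub_one_le_exp_norm_sub_one (t : ℂ) :
    ‖Complex.exp t - 1‖ ≤ Real.exp ‖t‖ - 1 := by
  simpa using (hasSum_fwdDiff_iter_pow_mul_div_factorial 1 t).norm_le_of_bounded
    (hasSum_norm_fwdDiff_iter_pow_mul_div_factorial 1 t) fun _ ↦ le_rfl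

theorem summable_norm_fwdDiff_iter_pow_mul_div_factorial_mul_pow {w t : ℂ}
    (h : ‖w‖ * (Real.exp ‖t‖ - 1) < 1) :
    Summable fun p : ℕ × ℕ ↦
      ‖Δ_[1] ^[p.1] (fun r : ℂ ↦ r ^ p.2) 0 * t ^ p.2 / p.2 ! * w ^ p.1‖ := by
  have hrow (n : ℕ) : HasSum (fun m ↦ ‖Δ_[1] ^[n] (fun r : ℂ ↦ r ^ m) 0 * t ^ m / m ! * w ^ n‖)
      ((‖w‖ * (Real.exp ‖t‖ - 1)) ^ n) := by
    simp_rw [norm_mul _ (w ^ n), norm_pow, mul_pow, mul_comm (‖w‖ ^ n)]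
    exact (hasSum_norm_fwdDiff_iter_pow_mul_div_factorial n t).mul_right _
  refine (summable_prod_of_nonneg fun _ ↦ norm_nonneg _).2 ⟨fun n ↦ (hrow n).summable, ?_⟩
  simp_rw [(hrow _).tsum_eq]
  exact summable_geometric_of_lt_one
    (mul_nonneg (norm_nonneg w) (sub_nonneg.2 (Real.one_le_exp (norm_nonneg t)))) h

theorem geomPoly_eq_sum_fwdDiff_iter (m : ℕ) (w : ℂ) :
    geomPoly m w = ∑ n ∈ range (m + 1), Δ_[1] ^[n] (fun r : ℂ ↦ r ^ m) 0 * w ^ n := by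
  simp_rw [geomPoly, stirling2_mul_factorial]

theorem hasSum_geomPoly_mul_pow_div_factorial {w t : ℂ} (h : ‖w‖ * (Real.exp ‖t‖ - 1) < 1) :
    HasSum (fun m ↦ geomPoly m w * t ^ m / m !) (1 - w * (Complex.exp t - 1))⁻¹ := by
  let G : ℕ × ℕ → ℂ := fun p ↦ Δ_[1] ^[p.1] (fun r : ℂ ↦ r ^ p.2) 0 * t ^ p.2 / p.2 ! * w ^ p.1
  have hG : Summable G :=
    (summable_norm_fwdDiff_iter_pow_mul_div_factorial_mul_pow h).of_norm
  have hrows (n : ℕ) : HasSum (fun m ↦ G (n, m)) ((w * (Complex.exp t - 1)) ^ n) := by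
    rw [mul_pow, mul_comm (w ^ n)]
    exact (hasSum_fwdDiff_iter_pow_mul_div_factorial n t).mul_right (w ^ n)
  have hcols (m : ℕ) : HasSum (fun n ↦ G (n, m)) (geomPoly m w * t ^ m / m !) := by
    have hvanish : ∀ n ∉ range (m + 1), G (n, m) = 0 := fun n hn ↦ by
      simp [G, fwdDiff_iter_pow_eq_zero_of_lt (by simpa using hn : m < n)]
    convert hasSum_sum_of_ne_finset_zero (L := .unconditional ℕ) hvanish using 1
    rw [geomPoly_eq_sum_fwdDiff_iter, sum_mul, sum_div]
    exact sum_congr rfl fun n _ ↦ by ring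
  have hratio : ‖w * (Complex.exp t - 1)‖ < 1 := by
    rw [norm_mul]
    exact (mul_le_mul_of_nonneg_left (Complex.norm_exp_sub_one_le_exp_norm_sub_one t)
      (norm_nonneg w)).trans_lt h
  have hsum : ∑' p, G p = (1 - w * (Complex.exp t - 1))⁻¹ :=
    (hG.hasSum.prod_fiberwise hrows).unique (hasSum_geometric_of_norm_lt_one hratio)
  rw [← hsum]
  exact ((Equiv.prodComm ℕ ℕ).hasSum_iff.2 hG.hasSum).prod_fiberwise hcols

theorem hasFPowerSeriesAt_ofScalars_of_eventually_hasSum {f : ℂ → ℂ} {c : ℕ → ℂ} {x : ℂ}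
    (h : ∀ᶠ z in 𝓝 x, HasSum (fun m ↦ c m * (z - x) ^ m) (f z)) :
    HasFPowerSeriesAt f (FormalMultilinearSeries.ofScalars ℂ c) x := by
  obtain ⟨ε, hε, hball⟩ := Metric.eventually_nhds_iff_ball.1 h
  have hsum {y : ℂ} (hy : ‖y‖ < ε) : HasSum (fun m ↦ c m * y ^ m) (f (x + y)) := by
    simpa using hball (x + y) (by simpa using hy)
  refine ⟨(ε / 2).toNNReal, FormalMultilinearSeries.le_radius_of_summable _ ?_,
    by simpa using hε, fun {y} hy ↦ ?_⟩
  · have hε2 : ‖((ε / 2 : ℝ) : ℂ)‖ < ε := by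
      rw [Complex.norm_real, Real.norm_of_nonneg (by positivity)]; linarith
    simpa [FormalMultilinearSeries.ofScalars_norm, max_eq_left (half_pos hε).le,
      abs_of_pos hε] using summable_norm_iff.2 (hsum hε2).summable
  · rw [Metric.eball_coe, mem_ball_zero_iff, Real.coe_toNNReal _ (half_pos hε).le] at hy
    simpa [FormalMultilinearSeries.ofScalars_apply_eq, mul_comm] using hsum (by linarith)

theorem HasFPowerSeriesAt.hasSum_of_differentiableOn_ball {f : ℂ → ℂ} {c : ℕ → ℂ} {x : ℂ}
    {R : ℝ} (hc : HasFPowerSeriesAt f (FormalMultilinearSeries.ofScalars ℂ c) x)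
    (hf : DifferentiableOn ℂ f (ball x R)) {z : ℂ} (hz : z ∈ ball x R) :
    HasSum (fun m ↦ c m * (z - x) ^ m) (f z) := by
  obtain rfl : c = fun n ↦ iteratedDeriv n f x / n ! :=
    FormalMultilinearSeries.ofScalars_series_injective ℂ ℂ
      (hc.eq_formalMultilinearSeries hc.analyticAt.hasFPowerSeriesAt)
  have hterm (n : ℕ) : (n ! : ℂ)⁻¹ • (z - x) ^ n • iteratedDeriv n f x =
      iteratedDeriv n f x / n ! * (z - x) ^ n := by
    simp only [smul_eq_mul]; ring
  simpa only [hterm] using Complex.hasSum_taylorSeries_on_ball hf hz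

theorem Complex.pi_le_norm_of_exp_eq_neg_one {z : ℂ} (hz : Complex.exp z = -1) :
    Real.pi ≤ ‖z‖ := by
  obtain ⟨n, rfl⟩ := Complex.exp_eq_exp_iff_exists_int.1 (hz.trans Complex.exp_pi_mul_I.symm)
  have hodd : (1 : ℝ) ≤ |((2 * n + 1 : ℤ) : ℝ)| := by
    rw [← Int.cast_abs]; exact_mod_cast Int.one_le_abs (by omega)
  have : Real.pi * I + n * (2 * Real.pi * I) = ((2 * n + 1 : ℤ) : ℂ) * Real.pi * I := by
    push_cast; ring
  rw [this, norm_mul, norm_mul, Complex.norm_I, Complex.norm_intCast, Complex.norm_real,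
    Real.norm_of_nonneg Real.pi_pos.le, mul_one]
  nlinarith [Real.pi_pos]

/-- For every complex `t` with `|t| < π`, the series `∑ m, ω_m(-1/2) t^m / m!`
converges and its sum is `2 / (e^t + 1)`, where
`ω_m(-1/2) = ∑ n in range (m+1), S(m,n) n! (-1)^n / 2^n`. -/
theorem geomPoly_half_generating_function (t : ℂ) (ht : ‖t‖ < Real.pi) :
    HasSum (fun m : ℕ => geomPoly m (-1 / 2) * t ^ m / (m.factorial : ℂ))
      (2 / (Complex.exp t + 1)) := by
  set f : ℂ → ℂ := fun z ↦ 2 / (Complex.exp z + 1)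
  have hsmall : ∀ᶠ z in 𝓝 0, HasSum (fun m ↦ geomPoly m (-1 / 2) / m ! * (z - 0) ^ m) (f z) := by
    filter_upwards [ball_mem_nhds 0 (Real.log_pos (by norm_num : (1 : ℝ) < 3))] with z hz
    have hexp : Real.exp ‖z‖ < 3 :=
      (Real.lt_log_iff_exp_lt (by norm_num)).1 (mem_ball_zero_iff.1 hz)
    have hw : ‖(-1 / 2 : ℂ)‖ * (Real.exp ‖z‖ - 1) < 1 := by
      rw [norm_div, norm_neg, norm_one, Complex.norm_two]; linarith
    convert hasSum_geomPoly_mul_pow_div_factorial hw using 1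
    · ext m; ring
    · rw [show 1 - -1 / 2 * (Complex.exp z - 1) = (Complex.exp z + 1) / 2 by ring, inv_div]
  have hf : DifferentiableOn ℂ f (ball 0 Real.pi) := fun z hz ↦
    ((differentiableAt_const 2).div (Complex.differentiableAt_exp.add_const 1) fun h ↦
      (Complex.pi_le_norm_of_exp_eq_neg_one (eq_neg_of_add_eq_zero_left h)).not_gt
        (mem_ball_zero_iff.1 hz)).differentiableWithinAt
  simpa [div_mul_eq_mul_div] using (hasFPowerSeriesAt_ofScalars_of_eventually_hasSum
    hsmall).hasSum_of_differentiableOn_ball hf (mem_ball_zero_iff.2 ht)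
end

section
/- For every nonnegative integer m, the m-th Bernoulli number satisfies B_m = Σ_{n=0}^{m} (−1)^n · (n!/(n+1)) · S(m,n), where the Bernoulli numbers are those of the generating function t/(e^t − 1) = Σ_{m≥0} B_m t^m/m! (so B_1 = −1/2). -/
open Finset

/-!
Write `D n m` for the `n`-th forward difference of `x ↦ x ^ m` at `0`, so that `D n m = n! S(m,n)`.
The Bernoulli numbers are determined by `∑_{k<N} C(N,k) B_k = [N = 1]`, and the candidate
`∑_n (-1)^n D n m / (n + 1)` satisfies the same recursion: applying `Δⁿ` to
`(x + 1)^N - x^N = ∑_{k<N} C(N,k) x^k` turns `∑_{k<N} C(N,k) D n k` into `D (n+1) N`, and the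
Leibniz rule for `Δ` applied to `x · x^(N-1)` gives `D (n+1) N = (n+1) (D n (N-1) + D (n+1) (N-1))`,
after which the sum over `n` telescopes.
-/

open fwdDiff

section CommRing

variable {R : Type*} [CommRing R]

theorem fwdDiff_iter_succ_id_mul (g : R → R) (n : ℕ) (y : R) :
    Δ_[1] ^[n + 1] (fun x ↦ x * g x) y =
      y * Δ_[1] ^[n + 1] g y + (n + 1) * Δ_[1] ^[n] g (y + 1) := by
  induction n generalizing y with
  | zero =>
    simp only [zero_add, Function.iterate_one, Function.iterate_zero, id, fwdDiff]
    push_cast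
    ring
  | succ n ih =>
    rw [Function.iterate_succ_apply', fwdDiff, ih, ih]
    simp only [Function.iterate_succ_apply', fwdDiff]
    push_cast
    ring

theorem fwdDiff_iter_pow_succ_zero (n m : ℕ) :
    Δ_[1] ^[n + 1] (fun x : R ↦ x ^ (m + 1)) 0 =
      (n + 1) * (Δ_[1] ^[n] (fun x : R ↦ x ^ m) 0 + Δ_[1] ^[n + 1] (fun x : R ↦ x ^ m) 0) := by
  simp_rw [pow_succ', fwdDiff_iter_succ_id_mul, zero_mul, zero_add,
    Function.iterate_succ_apply' _ n, fwdDiff, zero_add]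
  ring

theorem sum_choose_mul_fwdDiff_iter_pow (n N : ℕ) :
    ∑ m ∈ range N, (N.choose m : R) * Δ_[1] ^[n] (fun x : R ↦ x ^ m) 0 =
      Δ_[1] ^[n + 1] (fun x : R ↦ x ^ N) 0 := by
  have hΔ : Δ_[1] (fun x : R ↦ x ^ N) = ∑ m ∈ range N, N.choose m • fun x ↦ x ^ m := by
    ext x
    simp [nsmul_eq_mul, fwdDiff, add_pow, sum_range_succ, mul_comm]
  rw [Function.iterate_succ_apply, hΔ, fwdDiff_iter_finsetSum, Finset.sum_apply]
  exact sum_congr rfl fun m _ ↦ by rw [fwdDiff_iter_const_smul, Pi.smul_apply, nsmul_eq_mul]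

theorem sum_range_mul_fwdDiff_iter_pow_of_lt (c : ℕ → R) {m N : ℕ} (h : m < N) :
    ∑ n ∈ range (m + 1), c n * Δ_[1] ^[n] (fun x : R ↦ x ^ m) 0 =
      ∑ n ∈ range N, c n * Δ_[1] ^[n] (fun x : R ↦ x ^ m) 0 := by
  refine sum_subset (range_subset_range.mpr h) fun n _ hn ↦ ?_
  rw [fwdDiff_iter_pow_eq_zero_of_lt (by simpa using hn), Pi.zero_apply, mul_zero]

end CommRing

section CharZero

variable {K : Type*} [Field K] [CharZero K]

theorem sum_choose_mul_sum_fwdDiff_iter_pow (N : ℕ) :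
    ∑ k ∈ range N, (N.choose k : K) *
        ∑ n ∈ range (k + 1), (-1) ^ n / (n + 1) * Δ_[1] ^[n] (fun x : K ↦ x ^ k) 0 =
      if N = 1 then 1 else 0 := by
  obtain _ | M := N
  · simp
  calc _ = ∑ k ∈ range (M + 1), ∑ n ∈ range (M + 1),
          ((M + 1).choose k : K) * ((-1) ^ n / (n + 1) * Δ_[1] ^[n] (fun x : K ↦ x ^ k) 0) := by
        refine sum_congr rfl fun k hk ↦ ?_
        rw [sum_range_mul_fwdDiff_iter_pow_of_lt _ (mem_range.mp hk), mul_sum]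
    _ = ∑ n ∈ range (M + 1), (-1) ^ n / (n + 1) *
          ∑ k ∈ range (M + 1), ((M + 1).choose k : K) * Δ_[1] ^[n] (fun x : K ↦ x ^ k) 0 := by
        rw [sum_comm]
        exact sum_congr rfl fun n _ ↦ by rw [mul_sum]; exact sum_congr rfl fun k _ ↦ by ring
    _ = ∑ n ∈ range (M + 1), ((-1) ^ n * Δ_[1] ^[n] (fun x : K ↦ x ^ M) 0 -
          (-1) ^ (n + 1) * Δ_[1] ^[n + 1] (fun x : K ↦ x ^ M) 0) := by
        refine sum_congr rfl fun n _ ↦ ?_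
        rw [sum_choose_mul_fwdDiff_iter_pow, fwdDiff_iter_pow_succ_zero]
        field_simp
        ring
    _ = if M + 1 = 1 then 1 else 0 := by
        rw [sum_range_sub', fwdDiff_iter_pow_eq_zero_of_lt (Nat.lt_succ_self M)]
        simp [zero_pow_eq]

theorem bernoulli_eq_sum_fwdDiff_iter_pow (m : ℕ) :
    (bernoulli m : K) =
      ∑ n ∈ range (m + 1), (-1) ^ n / (n + 1) * Δ_[1] ^[n] (fun x : K ↦ x ^ m) 0 := by
  induction m using Nat.strong_induction_on with
  | _ m ih =>
    have hB := congrArg (Rat.cast : ℚ → K) (sum_bernoulli (m + 1))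
    have hS := sum_choose_mul_sum_fwdDiff_iter_pow (K := K) (m + 1)
    push_cast [apply_ite (Rat.cast : ℚ → K)] at hB
    rw [sum_range_succ] at hB hS
    simp only [add_eq_right] at hS
    rw [sum_congr rfl fun k hk ↦ by rw [ih k (mem_range.mp hk)], ← hS] at hB
    have hm : ((m + 1).choose m : K) ≠ 0 := by
      rw [Nat.choose_succ_self_right]
      exact_mod_cast m.succ_ne_zero
    exact mul_left_cancel₀ hm (add_left_cancel hB)

end CharZero

theorem factorial_mul_stirling2 (m n : ℕ) :
    (n.factorial : ℂ) * stirling2 m n = Δ_[1] ^[n] (fun x : ℂ ↦ x ^ m) 0 := by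
  rw [stirling2, mul_inv_cancel_left₀ (by exact_mod_cast n.factorial_ne_zero),
    fwdDiff_iter_eq_sum_shift]
  simp [zsmul_eq_mul]

/-- For every nonnegative integer `m`, the `m`-th Bernoulli number (with the
convention `B₁ = -1/2`, i.e. the generating function `t/(e^t - 1)`, which is
Mathlib's `bernoulli`) satisfies
`B_m = ∑ n in range (m+1), (-1)^n * (n!/(n+1)) * S(m,n)`. -/
theorem bernoulli_eq_sum_stirling2 (m : ℕ) :
    (bernoulli m : ℂ) =
      ∑ n ∈ range (m + 1),
        (-1) ^ n * ((n.factorial : ℂ) / ((n : ℂ) + 1)) * stirling2 m n := by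
  rw [bernoulli_eq_sum_fwdDiff_iter_pow]
  refine sum_congr rfl fun n _ ↦ ?_
  rw [← factorial_mul_stirling2]
  ring
end
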